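/- In a finite MDP, if the successor measure factorizes as M^π(s,a,s⁺) = ψ^π(s,a)ᵀ φ(s⁺) ρ(s⁺) where ρ is a positive density and the matrix E_ρ[φφᵀ] is invertible, then ψ^π(s,a) is the successor feature for the state feature map s ↦ (E_ρ[φφᵀ])^{-1} φ(s), i.e., ψ^π(s,a) = ∑_{s⁺} M^π(s,a,s⁺)·(E_ρ[φφᵀ])^{-1} φ(s⁺). -/
import Mathlib


/-- If the successor measure factorizes as
`Mπ(s,a,splus) = ψπ(s,a)ᵀ φ(splus) ρ(splus)` with `ρ` positive and `E_ρ[φφᵀ]`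
invertible, then `ψπ(s,a)` is the successor feature for the state feature map
`s ↦ (E_ρ[φφᵀ])⁻¹ φ(s)`. -/
theorem psi_is_successor_feature {S SA : Type} [Fintype S] (d : ℕ)
    (ρ : S → ℝ) (hρ : ∀ s, 0 < ρ s) (φ : S → Fin d → ℝ)
    (G : Matrix (Fin d) (Fin d) ℝ)
    (hG : G = ∑ s, ρ s • Matrix.vecMulVec (φ s) (φ s))
    (hGunit : IsUnit G)
    (M : SA → S → ℝ) (ψ : SA → Fin d → ℝ)
    (hM : ∀ sa splus, M sa splus = (∑ j, ψ sa j * φ splus j) * ρ splus) :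
    ∀ sa, ψ sa = ∑ splus, M sa splus • G⁻¹.mulVec (φ splus) := by
  intro sa
  have hdet : IsUnit G.det := (Matrix.isUnit_iff_isUnit_det G).mp hGunit
  have hGv : G.mulVec (ψ sa) = ∑ s, (M sa s) • φ s := by
    rw [hG]
    funext i
    simp only [Matrix.mulVec, dotProduct, Finset.sum_apply, Matrix.sum_apply,
      Matrix.smul_apply, Matrix.vecMulVec_apply, Pi.smul_apply, smul_eq_mul, hM,
      Finset.sum_mul]
    rw [Finset.sum_comm]
    exact Finset.sum_congr rfl fun s _ => Finset.sum_congr rfl fun j _ => by ring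
  have key : ∑ splus, M sa splus • G⁻¹.mulVec (φ splus)
      = G⁻¹.mulVec (G.mulVec (ψ sa)) := by
    rw [hGv]
    rw [show (G⁻¹.mulVec (∑ s, M sa s • φ s)) = G⁻¹.mulVecLin (∑ s, M sa s • φ s) from rfl,
      map_sum]
    simp [Matrix.mulVecLin_apply]
  rw [key, Matrix.mulVec_mulVec, Matrix.nonsing_inv_mul G hdet, Matrix.one_mulVec]
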